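/- Let B be a symmetric bilinear form on F_2^m, and let G = F_2^m × F_2 with operation (x,y) ∗ (x',y') = (x+x', y+y'+B(x,x')). A subset R of G is a (2^m, 2, 2^m, 2^{m-1}) difference set relative to N = {0} × F_2 if and only if there is a function f : F_2^m → F_2 such that R = {(x, f(x)) : x ∈ F_2^m} and for every nonzero a ∈ F_2^m and every b ∈ F_2, the equation f(x+a) + f(x) + B(a,x) = b has exactly 2^{m-1} solutions x. -/

import Mathlib

/-!
In `G`, `p ∗ q⁻¹ = (p₁ + q₁, p₂ + q₂ + B(q₁,q₁) + B(p₁,q₁))`. Two elements of `R` with equal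
first and different second coordinates have quotient `(0,1)`, so the last condition says that
the first projection is injective on `R`; together with `|R| = 2^m` this makes `R` the graph of a
function `f`. On a graph, the pairs with quotient `(a,b)` are the `((x+a, f(x+a)), (x, f x))` with
`f(x+a) + f(x) + B(a,x) = b`, because `B(x,x) + B(x+a,x) = B(a,x)`.
-/

open Finset

section GraphFinset

variable {α β : Type*} [Fintype α] {R : Finset (α × β)}

theorem Finset.exists_coe_eq_graph_of_injOn_fst (hinj : Set.InjOn Prod.fst (R : Set (α × β)))
    (hcard : #R = Fintype.card α) : ∃ f : α → β, (R : Set (α × β)) = {p | p.2 = f p.1} := by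
  classical
  have himage : R.image Prod.fst = univ :=
    (R.image Prod.fst).eq_univ_of_card ((card_image_of_injOn hinj).trans hcard)
  have hfiber : ∀ x, ∃ y, (x, y) ∈ R := fun x => by
    obtain ⟨p, hp, rfl⟩ := mem_image.1 (himage ▸ mem_univ x)
    exact ⟨p.2, hp⟩
  choose f hf using hfiber
  refine ⟨f, Set.ext fun p => ⟨fun hp => ?_, fun hp => ?_⟩⟩
  · exact congrArg Prod.snd (hinj hp (hf p.1) rfl)
  · exact (Prod.ext rfl hp : p = (p.1, f p.1)) ▸ hf p.1

theorem Finset.card_eq_of_coe_eq_graph {f : α → β} (hR : (R : Set (α × β)) = {p | p.2 = f p.1}) :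
    #R = Fintype.card α :=
  card_nbij' Prod.fst (fun x => (x, f x)) (fun _ _ => mem_coe.2 (mem_univ _))
    (fun x _ => by rw [hR]; rfl) (fun p hp => by
      rw [hR] at hp
      exact Prod.ext rfl hp.symm) (fun _ _ => rfl)

end GraphFinset

section BilinearExtension

variable {V : Type*} [AddCommGroup V] [Module (ZMod 2) V] (B : V → V → ZMod 2)

def bilinExtMul (p q : V × ZMod 2) : V × ZMod 2 := (p.1 + q.1, p.2 + q.2 + B p.1 q.1)

def bilinExtInv (p : V × ZMod 2) : V × ZMod 2 := (-p.1, -p.2 + B p.1 p.1)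

theorem bilinExtMul_bilinExtInv (p q : V × ZMod 2) :
    bilinExtMul B p (bilinExtInv B q) = (p.1 + q.1, p.2 + q.2 + B q.1 q.1 + B p.1 q.1) := by
  simp only [bilinExtMul, bilinExtInv, ZModModule.neg_eq_self, add_assoc]

theorem bilinExtMul_bilinExtInv_eq_zero_one_of_fst_eq {p q : V × ZMod 2} (h₁ : p.1 = q.1)
    (h₂ : p.2 ≠ q.2) : bilinExtMul B p (bilinExtInv B q) = (0, 1) := by
  have hne : ∀ s t : ZMod 2, s ≠ t → s + t = 1 := by decide
  rw [bilinExtMul_bilinExtInv, h₁, ZModModule.add_self, add_assoc _ (B q.1 q.1),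
    ZModModule.add_self, add_zero, hne _ _ h₂]

theorem injOn_fst_of_bilinExtMul_bilinExtInv_ne {R : Finset (V × ZMod 2)}
    (hR : ∀ pr ∈ R ×ˢ R, bilinExtMul B pr.1 (bilinExtInv B pr.2) ≠ (0, 1)) :
    Set.InjOn Prod.fst (R : Set (V × ZMod 2)) := fun p hp q hq h₁ => by
  by_contra hne
  exact hR (p, q) (mem_product.2 ⟨hp, hq⟩)
    (bilinExtMul_bilinExtInv_eq_zero_one_of_fst_eq B h₁ fun h₂ => hne (Prod.ext h₁ h₂))

variable {B}

theorem bilinExtMul_bilinExtInv_graph (hadd : ∀ x y z, B (x + y) z = B x z + B y z)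
    (f : V → ZMod 2) (x a : V) :
    bilinExtMul B (x + a, f (x + a)) (bilinExtInv B (x, f x)) = (a, f (x + a) + f x + B a x) := by
  rw [bilinExtMul_bilinExtInv, add_assoc _ (B x x), hadd, ← add_assoc (B x x),
    ZModModule.add_self, zero_add, add_comm x a, add_assoc, ZModModule.add_self, add_zero]

theorem card_filter_bilinExtMul_bilinExtInv_eq [Fintype V] [DecidableEq V]
    (hadd : ∀ x y z, B (x + y) z = B x z + B y z)
    {R : Finset (V × ZMod 2)} {f : V → ZMod 2} (hR : (R : Set (V × ZMod 2)) = {p | p.2 = f p.1})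
    (a : V) (b : ZMod 2) :
    #((R ×ˢ R).filter fun pr => bilinExtMul B pr.1 (bilinExtInv B pr.2) = (a, b)) =
      #(univ.filter fun x => f (x + a) + f x + B a x = b) := by
  have hmem : ∀ p, p ∈ R ↔ p.2 = f p.1 := fun p => Set.ext_iff.1 hR p
  have hpair : ∀ pr ∈ (R ×ˢ R).filter fun pr => bilinExtMul B pr.1 (bilinExtInv B pr.2) = (a, b),
      pr = ((pr.2.1 + a, f (pr.2.1 + a)), (pr.2.1, f pr.2.1)) ∧
        f (pr.2.1 + a) + f pr.2.1 + B a pr.2.1 = b := by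
    rintro ⟨⟨y, fy⟩, ⟨x, fx⟩⟩ hpr
    simp only [mem_filter, mem_product, hmem] at hpr
    obtain ⟨⟨rfl, rfl⟩, h⟩ := hpr
    have hfst : y + x = a := by simpa [bilinExtMul_bilinExtInv] using congrArg Prod.fst h
    obtain rfl : y = x + a := by
      rw [← hfst, add_left_comm, ZModModule.add_self, add_zero]
    rw [bilinExtMul_bilinExtInv_graph hadd, Prod.mk.injEq] at h
    exact ⟨rfl, h.2⟩
  symm
  refine card_nbij' (fun x => ((x + a, f (x + a)), (x, f x))) (fun pr => pr.2.1) ?_ ?_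
    (fun _ _ => rfl) ?_
  · intro x hx
    simp only [mem_coe, mem_filter, mem_univ, true_and] at hx
    simp only [mem_coe, mem_filter, mem_product, hmem, bilinExtMul_bilinExtInv_graph hadd, hx,
      and_self]
  · exact fun pr hpr => mem_filter.2 ⟨mem_univ _, (hpair pr hpr).2⟩
  · exact fun pr hpr => (hpair pr hpr).1.symm

end BilinearExtension

open scoped Classical in
theorem rds_in_bilinear_extension_iff_general (m : ℕ)
    (B : (Fin m → ZMod 2) → (Fin m → ZMod 2) → ZMod 2)
    (hadd₁ : ∀ x y z, B (x + y) z = B x z + B y z)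
    (R : Finset ((Fin m → ZMod 2) × ZMod 2)) :
    let star : (Fin m → ZMod 2) × ZMod 2 → (Fin m → ZMod 2) × ZMod 2 →
        (Fin m → ZMod 2) × ZMod 2 :=
      fun p q => (p.1 + q.1, p.2 + q.2 + B p.1 q.1)
    let inv : (Fin m → ZMod 2) × ZMod 2 → (Fin m → ZMod 2) × ZMod 2 :=
      fun p => (-p.1, -p.2 + B p.1 p.1)
    (R.card = 2 ^ m ∧
      (∀ g : (Fin m → ZMod 2) × ZMod 2, g.1 ≠ 0 →
        ((R ×ˢ R).filter (fun pr => star pr.1 (inv pr.2) = g)).card = 2 ^ (m - 1)) ∧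
      ((R ×ˢ R).filter
        (fun pr => star pr.1 (inv pr.2) = ((0 : Fin m → ZMod 2), (1 : ZMod 2)))).card
          = 0) ↔
    ∃ f : (Fin m → ZMod 2) → ZMod 2,
      (R : Set ((Fin m → ZMod 2) × ZMod 2)) = {p | p.2 = f p.1} ∧
      ∀ a : Fin m → ZMod 2, a ≠ 0 → ∀ b : ZMod 2,
        (Finset.univ.filter
          (fun x : Fin m → ZMod 2 => f (x + a) + f x + B a x = b)).card
            = 2 ^ (m - 1) := by
  intro star inv
  have hcardV : Fintype.card (Fin m → ZMod 2) = 2 ^ m := by simp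
  constructor
  · rintro ⟨hcard, hdiff, hN⟩
    have hinj := injOn_fst_of_bilinExtMul_bilinExtInv_ne B fun pr hpr =>
      filter_eq_empty_iff.1 (card_eq_zero.1 hN) hpr
    obtain ⟨f, hf⟩ := exists_coe_eq_graph_of_injOn_fst hinj (hcard.trans hcardV.symm)
    exact ⟨f, hf, fun a ha b =>
      card_filter_bilinExtMul_bilinExtInv_eq hadd₁ hf a b ▸ hdiff (a, b) ha⟩
  · rintro ⟨f, hf, hcount⟩
    refine ⟨(card_eq_of_coe_eq_graph hf).trans hcardV, fun g hg => ?_, ?_⟩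
    · exact (card_filter_bilinExtMul_bilinExtInv_eq hadd₁ hf g.1 g.2).trans (hcount g.1 hg g.2)
    · have hB0 : ∀ x, B 0 x = 0 := fun x => by simpa [ZModModule.add_self] using hadd₁ 0 0 x
      refine (card_filter_bilinExtMul_bilinExtInv_eq hadd₁ hf 0 1).trans ?_
      simp [ZModModule.add_self, hB0]

open scoped Classical in
/-- With `G = F_2^m × F_2` and `(x,y) ∗ (x',y') = (x+x', y+y'+B(x,x'))` for a symmetric
bilinear form `B`, a subset `R ⊆ G` is a `(2^m, 2, 2^m, 2^{m-1})` difference set relative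
to `N = {0} × F_2` if and only if `R = {(x, f x)}` for some `f : F_2^m → F_2` such that
`f(x+a)+f(x)+B(a,x) = b` has exactly `2^{m-1}` solutions for all `b` and nonzero `a`. -/
theorem rds_in_bilinear_extension_iff (m : ℕ)
    (B : (Fin m → ZMod 2) → (Fin m → ZMod 2) → ZMod 2)
    (hsym : ∀ x y, B x y = B y x)
    (hadd₁ : ∀ x y z, B (x + y) z = B x z + B y z)
    (hadd₂ : ∀ x y z, B x (y + z) = B x y + B x z)
    (R : Finset ((Fin m → ZMod 2) × ZMod 2)) :
    let star : (Fin m → ZMod 2) × ZMod 2 → (Fin m → ZMod 2) × ZMod 2 →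
        (Fin m → ZMod 2) × ZMod 2 :=
      fun p q => (p.1 + q.1, p.2 + q.2 + B p.1 q.1)
    let inv : (Fin m → ZMod 2) × ZMod 2 → (Fin m → ZMod 2) × ZMod 2 :=
      fun p => (-p.1, -p.2 + B p.1 p.1)
    (R.card = 2 ^ m ∧
      (∀ g : (Fin m → ZMod 2) × ZMod 2, g.1 ≠ 0 →
        ((R ×ˢ R).filter (fun pr => star pr.1 (inv pr.2) = g)).card = 2 ^ (m - 1)) ∧
      ((R ×ˢ R).filter
        (fun pr => star pr.1 (inv pr.2) = ((0 : Fin m → ZMod 2), (1 : ZMod 2)))).card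
          = 0) ↔
    ∃ f : (Fin m → ZMod 2) → ZMod 2,
      (R : Set ((Fin m → ZMod 2) × ZMod 2)) = {p | p.2 = f p.1} ∧
      ∀ a : Fin m → ZMod 2, a ≠ 0 → ∀ b : ZMod 2,
        (Finset.univ.filter
          (fun x : Fin m → ZMod 2 => f (x + a) + f x + B a x = b)).card
            = 2 ^ (m - 1) :=
  rds_in_bilinear_extension_iff_general m B hadd₁ R
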